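/- arXiv:math-ph/0306060 — 6 statements merged into one kernel-verified Lean document; each statement's English description precedes it below -/
import Mathlib

section
/- Every smooth G-invariant function on SL(2,ℂ), where G = SU(2)×SU(2) acts by (U₁,U₂)·A = U₁AU₂⁻¹, can be written as f ∘ y, where y(A) = arccosh(tr(A†A)/2) and f : ℝ → ℝ is a smooth even function. -/
noncomputable def arcosh (x : ℝ) : ℝ := Real.log (x + Real.sqrt (x ^ 2 - 1))

attribute [local instance] Matrix.frobeniusNormedAddCommGroup Matrix.frobeniusNormedSpace

open Matrix in
lemma diagonal_congr' {n α : Type*} [DecidableEq n] [Zero α] {f g : n → α}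
    (h : ∀ i, f i = g i) : Matrix.diagonal f = Matrix.diagonal g := by
  rw [funext h]

lemma sqrt_exp' (a : ℝ) : Real.sqrt (Real.exp a) = Real.exp (a/2) := by
  rw [show Real.exp a = Real.exp (a/2) ^ 2 by rw [← Real.exp_nat_mul]; ring_nf,
    Real.sqrt_sq (Real.exp_nonneg _)]

lemma eig_id' (l0 l1 x : ℝ) (h0 : 0 < l0) (h1 : 0 < l1) (hm : l0 * l1 = 1)
    (hs : l0 + l1 = 2 * x) (hord : l1 ≤ l0) :
    Real.sqrt l0 = Real.exp (arcosh x / 2) ∧ Real.sqrt l1 = Real.exp (-(arcosh x / 2)) := by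
  have hx1 : 1 ≤ x := by nlinarith [sq_nonneg (l0 - l1)]
  have hs2 : Real.sqrt (x^2-1) ^ 2 = x^2 - 1 := Real.sq_sqrt (by nlinarith)
  have hsn : 0 ≤ Real.sqrt (x^2-1) := Real.sqrt_nonneg _
  have hpos : 0 < x + Real.sqrt (x^2-1) := by nlinarith
  have hexp : Real.exp (arcosh x) = x + Real.sqrt (x^2-1) := Real.exp_log hpos
  have hl0 : l0 = Real.exp (arcosh x) := by
    rw [hexp]; nlinarith [sq_nonneg (l0 - l1 - 2*Real.sqrt (x^2-1))]
  have hl1 : l1 = Real.exp (-arcosh x) := by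
    rw [Real.exp_neg, hexp]
    field_simp
    nlinarith
  refine ⟨by rw [hl0, sqrt_exp'], by rw [hl1, sqrt_exp']; ring_nf⟩

open Matrix in
lemma wmul' : (!![0,1;-1,0] : Matrix (Fin 2) (Fin 2) ℂ) * !![0,-1;1,0] = 1 := by
  ext i j; fin_cases i <;> fin_cases j <;>
    simp [Matrix.mul_apply, Fin.sum_univ_two, Matrix.one_apply, vecHead, vecTail,
      Matrix.vecMul, dotProduct]

open Matrix in
lemma wconj' (a b : ℂ) : (!![0,1;-1,0] : Matrix (Fin 2) (Fin 2) ℂ) *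
    Matrix.diagonal ![a,b] * !![0,-1;1,0] = Matrix.diagonal ![b,a] := by
  ext i j; fin_cases i <;> fin_cases j <;>
    simp [Matrix.mul_apply, Fin.sum_univ_two, Matrix.diagonal_apply, vecHead, vecTail,
      Matrix.vecMul, dotProduct]

open Matrix in
lemma wmem' : (!![0,1;-1,0] : Matrix (Fin 2) (Fin 2) ℂ) ∈
    Matrix.specialUnitaryGroup (Fin 2) ℂ := by
  rw [Matrix.mem_specialUnitaryGroup_iff, Matrix.mem_unitaryGroup_iff]
  constructor
  · ext i j; fin_cases i <;> fin_cases j <;>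
      simp [Matrix.mul_apply, Fin.sum_univ_two, Matrix.one_apply,
        Matrix.star_eq_conjTranspose, vecHead, vecTail, Matrix.vecMul, dotProduct]
  · simp [Matrix.det_fin_two]

noncomputable def cpath (u : ℝ) : Matrix (Fin 2) (Fin 2) ℂ :=
  Matrix.diagonal ![(Real.exp (u/2) : ℂ), (Real.exp (-(u/2)) : ℂ)]

open Matrix in
lemma cpath_det (u : ℝ) : (cpath u).det = 1 := by
  rw [cpath, Matrix.det_diagonal, Fin.prod_univ_two]
  simp only [Matrix.cons_val_zero, Matrix.cons_val_one, Matrix.head_cons]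
  rw [← Complex.ofReal_mul, ← Real.exp_add, add_neg_cancel, Real.exp_zero, Complex.ofReal_one]

open Matrix in
lemma cpath_smooth : ContDiff ℝ (⊤ : ℕ∞) cpath := by
  have hL : IsLinearMap ℝ (fun p : ℝ × ℝ =>
      (diagonal ![(p.1 : ℂ), (p.2 : ℂ)] : Matrix (Fin 2) (Fin 2) ℂ)) := by
    constructor
    · intro p q
      rw [Matrix.diagonal_add]
      exact diagonal_congr' fun i => by fin_cases i <;> push_cast <;> simp
    · intro r p
      rw [← Matrix.diagonal_smul]
      exact diagonal_congr' fun i => by fin_cases i <;> simp [Complex.real_smul]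
  have hcont : ContDiff ℝ (⊤ : ℕ∞) (fun p : ℝ × ℝ =>
      (diagonal ![(p.1 : ℂ), (p.2 : ℂ)] : Matrix (Fin 2) (Fin 2) ℂ)) :=
    (LinearMap.toContinuousLinearMap (IsLinearMap.mk' _ hL)).contDiff
  have hg : ContDiff ℝ (⊤ : ℕ∞) (fun u : ℝ => (Real.exp (u/2), Real.exp (-(u/2)))) :=
    ContDiff.prodMk (Real.contDiff_exp.comp (contDiff_id.div_const 2))
      (Real.contDiff_exp.comp (contDiff_id.div_const 2).neg)
  exact hcont.comp hg

open Matrix in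
open scoped ComplexOrder in
lemma svd2' (A : Matrix (Fin 2) (Fin 2) ℂ) (hA : A.det = 1) :
    ∃ (U₁ M₂ : Matrix (Fin 2) (Fin 2) ℂ) (l : Fin 2 → ℝ),
      (∀ i, 0 < l i) ∧ l 0 * l 1 = 1 ∧ (Aᴴ * A).trace.re = l 0 + l 1 ∧
      U₁ ∈ Matrix.specialUnitaryGroup (Fin 2) ℂ ∧
      M₂ᴴ ∈ Matrix.specialUnitaryGroup (Fin 2) ℂ ∧
      M₂ᴴ * M₂ = 1 ∧
      A = U₁ * diagonal (fun i => (Real.sqrt (l i) : ℂ)) * M₂ := by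
  set H := Aᴴ * A with hHdef
  have hPSD : H.PosSemidef := Matrix.posSemidef_conjTranspose_mul_self A
  have hH : H.IsHermitian := hPSD.1
  have hnn : ∀ i, 0 ≤ hH.eigenvalues i := hPSD.eigenvalues_nonneg
  have hdetH : H.det = 1 := by
    rw [hHdef, Matrix.det_mul, Matrix.det_conjTranspose, hA]; simp
  have hprod : hH.eigenvalues 0 * hH.eigenvalues 1 = 1 := by
    have := hH.det_eq_prod_eigenvalues
    rw [hdetH, Fin.prod_univ_two] at this
    rw [show (RCLike.ofReal : ℝ → ℂ) = Complex.ofReal from rfl] at this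
    exact_mod_cast this.symm
  set V : Matrix (Fin 2) (Fin 2) ℂ := (hH.eigenvectorUnitary : Matrix (Fin 2) (Fin 2) ℂ) with hV
  have hVmem : V ∈ Matrix.unitaryGroup (Fin 2) ℂ := hH.eigenvectorUnitary.2
  have hV1 : V * Vᴴ = 1 := (Matrix.mem_unitaryGroup_iff).mp hVmem
  have hV1' : Vᴴ * V = 1 := (Matrix.mem_unitaryGroup_iff').mp hVmem
  have hspec : H = V * diagonal (RCLike.ofReal ∘ hH.eigenvalues) * Vᴴ := hH.spectral_theorem
  have htr : H.trace.re = hH.eigenvalues 0 + hH.eigenvalues 1 := by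
    have h1 : H.trace = (hH.eigenvalues 0 : ℂ) + (hH.eigenvalues 1 : ℂ) := by
      conv_lhs => rw [hspec]
      rw [Matrix.trace_mul_cycle, hV1', one_mul, Matrix.trace_diagonal, Fin.sum_univ_two]
      rfl
    rw [h1]; simp
  have hpos : ∀ i, 0 < hH.eigenvalues i := by
    rw [Fin.forall_fin_two]
    constructor <;> rcases lt_or_eq_of_le (hnn 0) with h | h <;>
      rcases lt_or_eq_of_le (hnn 1) with h' | h' <;>
      first
        | assumption
        | (exfalso; rw [← h] at hprod; simp at hprod)
        | (exfalso; rw [← h'] at hprod; simp at hprod)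
  set mu : Fin 2 → ℝ := fun i => Real.sqrt (hH.eigenvalues i) with hmu
  have hmupos : ∀ i, 0 < mu i := fun i => Real.sqrt_pos.mpr (hpos i)
  have hmusq : ∀ i, (mu i) * (mu i) = hH.eigenvalues i := fun i => Real.mul_self_sqrt (hnn i)
  set D : Matrix (Fin 2) (Fin 2) ℂ := diagonal (fun i => (mu i : ℂ)) with hD
  set Dinv : Matrix (Fin 2) (Fin 2) ℂ := diagonal (fun i => ((mu i)⁻¹ : ℂ)) with hDinv
  have hDDinv : D * Dinv = 1 := by
    rw [hD, hDinv, Matrix.diagonal_mul_diagonal, ← Matrix.diagonal_one]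
    exact diagonal_congr' fun i => mul_inv_cancel₀ (Complex.ofReal_ne_zero.mpr (hmupos i).ne')
  have hDinvD : Dinv * D = 1 := by
    rw [hDinv, hD, Matrix.diagonal_mul_diagonal, ← Matrix.diagonal_one]
    exact diagonal_congr' fun i => inv_mul_cancel₀ (Complex.ofReal_ne_zero.mpr (hmupos i).ne')
  have hstarDinv : Dinvᴴ = Dinv := by
    rw [hDinv, Matrix.diagonal_conjTranspose]
    exact diagonal_congr' fun i => by
      simp [Function.comp_apply, Complex.star_def, ← Complex.ofReal_inv, Complex.conj_ofReal]
  have hDD : D * D = diagonal (RCLike.ofReal ∘ hH.eigenvalues) := by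
    rw [hD, Matrix.diagonal_mul_diagonal]
    exact diagonal_congr' fun i => by
      show ((mu i : ℂ) * (mu i : ℂ)) = ((hH.eigenvalues i : ℝ) : ℂ)
      rw [← Complex.ofReal_mul, hmusq i]
  set B : Matrix (Fin 2) (Fin 2) ℂ := A * V * Dinv with hB
  have hBunit : Bᴴ * B = 1 := by
    have e1 : Bᴴ * B = Dinv * (Vᴴ * (Aᴴ * A) * V) * Dinv := by
      rw [hB]
      simp only [Matrix.conjTranspose_mul, hstarDinv]
      noncomm_ring
    rw [e1, ← hHdef, hspec]
    have e2 : Vᴴ * (V * diagonal (RCLike.ofReal ∘ hH.eigenvalues) * Vᴴ) * V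
        = Vᴴ * V * diagonal (RCLike.ofReal ∘ hH.eigenvalues) * (Vᴴ * V) := by noncomm_ring
    rw [e2, hV1', one_mul, mul_one, ← hDD]
    have e3 : Dinv * (D * D) * Dinv = Dinv * D * (D * Dinv) := by noncomm_ring
    rw [e3, hDinvD, hDDinv, one_mul]
  have hADV : A = B * D * Vᴴ := by
    rw [hB]
    have e1 : A * V * Dinv * D * Vᴴ = A * (V * (Dinv * D * Vᴴ)) := by noncomm_ring
    rw [e1, hDinvD, one_mul, ← Matrix.mul_assoc, Matrix.mul_assoc, hV1, mul_one]
  have hdetD : D.det = 1 := by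
    rw [hD, Matrix.det_diagonal, Fin.prod_univ_two]
    show ((Real.sqrt (hH.eigenvalues 0) : ℂ)) * ((Real.sqrt (hH.eigenvalues 1) : ℂ)) = 1
    rw [← Complex.ofReal_mul, ← Real.sqrt_mul (hnn 0), hprod, Real.sqrt_one, Complex.ofReal_one]
  set z : ℂ := B.det with hz
  have hzz : star z * z = 1 := by
    have := congrArg Matrix.det hBunit
    rwa [Matrix.det_mul, Matrix.det_conjTranspose, Matrix.det_one] at this
  have hzz' : (starRingEnd ℂ) z * z = 1 := hzz
  have hdetV : z * star V.det = 1 := by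
    have := congrArg Matrix.det hADV
    rw [Matrix.det_mul, Matrix.det_mul, hA, hdetD, Matrix.det_conjTranspose] at this
    rw [← hz] at this
    linear_combination -this
  set P : Matrix (Fin 2) (Fin 2) ℂ := diagonal ![star z, 1] with hP
  set Q : Matrix (Fin 2) (Fin 2) ℂ := diagonal ![z, 1] with hQ
  have hPQ : P * Q = 1 := by
    rw [hP, hQ, Matrix.diagonal_mul_diagonal, ← Matrix.diagonal_one]
    exact diagonal_congr' fun i => by fin_cases i <;> simp [hzz']
  have hQP : Q * P = 1 := by
    rw [hQ, hP, Matrix.diagonal_mul_diagonal, ← Matrix.diagonal_one]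
    exact diagonal_congr' fun i => by
      fin_cases i <;> simp [mul_comm z ((starRingEnd ℂ) z), hzz']
  have hPH : Pᴴ = Q := by
    rw [hP, hQ, Matrix.diagonal_conjTranspose]
    exact diagonal_congr' fun i => by fin_cases i <;> simp
  have hQH : Qᴴ = P := by
    rw [hQ, hP, Matrix.diagonal_conjTranspose]
    exact diagonal_congr' fun i => by fin_cases i <;> simp
  have hPD : P * D = D * P := by
    rw [hP, hD, Matrix.diagonal_mul_diagonal, Matrix.diagonal_mul_diagonal]
    exact diagonal_congr' fun i => mul_comm _ _
  have hM2H : (Q * Vᴴ)ᴴ = V * P := by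
    rw [Matrix.conjTranspose_mul, Matrix.conjTranspose_conjTranspose, hQH]
  refine ⟨B * P, Q * Vᴴ, hH.eigenvalues, hpos, hprod, htr, ?_, ?_, ?_, ?_⟩
  · rw [Matrix.mem_specialUnitaryGroup_iff, Matrix.mem_unitaryGroup_iff']
    constructor
    · show (B * P)ᴴ * (B * P) = 1
      rw [Matrix.conjTranspose_mul, hPH]
      have e1 : Q * Bᴴ * (B * P) = Q * (Bᴴ * B) * P := by noncomm_ring
      rw [e1, hBunit, mul_one, hQP]
    · rw [Matrix.det_mul, hP, Matrix.det_diagonal, Fin.prod_univ_two]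
      simp only [Matrix.cons_val_zero, Matrix.cons_val_one, Matrix.head_cons, mul_one]
      rw [← hz, mul_comm]; exact hzz
  · rw [Matrix.mem_specialUnitaryGroup_iff, Matrix.mem_unitaryGroup_iff']
    constructor
    · rw [hM2H]
      show (V * P)ᴴ * (V * P) = 1
      rw [Matrix.conjTranspose_mul]
      have e1 : Pᴴ * Vᴴ * (V * P) = Pᴴ * (Vᴴ * V) * P := by noncomm_ring
      rw [e1, hV1', mul_one, hPH, hQP]
    · rw [hM2H, Matrix.det_mul, hP, Matrix.det_diagonal, Fin.prod_univ_two]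
      simp only [Matrix.cons_val_zero, Matrix.cons_val_one, Matrix.head_cons, mul_one]
      calc V.det * (starRingEnd ℂ) z = star (z * star V.det) := by
            rw [star_mul']; simp [mul_comm]
        _ = 1 := by rw [hdetV]; simp
  · rw [hM2H]
    have e1 : V * P * (Q * Vᴴ) = V * (P * Q) * Vᴴ := by noncomm_ring
    rw [e1, hPQ, mul_one, hV1]
  · rw [hADV]
    have e1 : B * P * D * (Q * Vᴴ) = B * (P * D * Q) * Vᴴ := by noncomm_ring
    rw [e1, hPD]
    have e2 : D * P * Q = D * (P * Q) := by noncomm_ring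
    rw [e2, hPQ, mul_one]


open Matrix in
/-- Every smooth `SU(2)×SU(2)`-invariant function on `SL(2,ℂ)` is of the form
`f ∘ y` with `y A = arcosh (tr(Aᴴ A)/2)` and `f` smooth and even. -/
theorem invariant_function_factors
    (F : Matrix (Fin 2) (Fin 2) ℂ → ℝ)
    (hsmooth : ContDiffOn ℝ (⊤ : ℕ∞) F {A : Matrix (Fin 2) (Fin 2) ℂ | A.det = 1})
    (hinv : ∀ U₁ U₂ : Matrix.specialUnitaryGroup (Fin 2) ℂ,
      ∀ A : Matrix (Fin 2) (Fin 2) ℂ, A.det = 1 →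
        F ((U₁ : Matrix (Fin 2) (Fin 2) ℂ) * A * (U₂ : Matrix (Fin 2) (Fin 2) ℂ)⁻¹) = F A) :
    ∃ f : ℝ → ℝ, ContDiff ℝ (⊤ : ℕ∞) f ∧ (∀ t, f (-t) = f t) ∧
      ∀ A : Matrix (Fin 2) (Fin 2) ℂ, A.det = 1 →
        F A = f (arcosh (((Aᴴ * A).trace).re / 2)) := by
  have hflip : ∀ u : ℝ, F (cpath (-u)) = F (cpath u) := by
    intro u
    have h2 := hinv ⟨_, wmem'⟩ ⟨_, wmem'⟩ (cpath u) (cpath_det u)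
    rw [show ((⟨!![0,1;-1,0], wmem'⟩ : Matrix.specialUnitaryGroup (Fin 2) ℂ) :
        Matrix (Fin 2) (Fin 2) ℂ)⁻¹ = !![0,-1;1,0] from Matrix.inv_eq_right_inv wmul'] at h2
    rw [← h2]
    show F (cpath (-u)) = F (!![0,1;-1,0] * cpath u * !![0,-1;1,0])
    conv_rhs => rw [cpath, wconj']
    rw [cpath]
    congr 1
    exact diagonal_congr' fun i => by
      fin_cases i <;> simp [neg_div, neg_neg]
  have hcd : ContDiff ℝ (⊤ : ℕ∞) fun u => F (cpath u) := by
    have h : ContDiffOn ℝ (⊤ : ℕ∞) (F ∘ cpath) Set.univ :=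
      hsmooth.comp (cpath_smooth.contDiffOn (s := Set.univ)) (fun u _ => cpath_det u)
    rw [contDiffOn_univ] at h
    exact h
  refine ⟨fun u => F (cpath u), hcd, hflip, ?_⟩
  intro A hA
  obtain ⟨U₁, M₂, l, hpos, hprod, htr, hU₁, hM₂H, hM₂unit, hAeq⟩ := svd2' A hA
  have hsum : l 0 + l 1 = 2 * (((Aᴴ * A).trace).re / 2) := by rw [← htr]; ring
  have hdetD : (diagonal fun i => ((Real.sqrt (l i) : ℝ) : ℂ)).det = 1 := by
    rw [Matrix.det_diagonal, Fin.prod_univ_two, ← Complex.ofReal_mul,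
      ← Real.sqrt_mul (hpos 0).le, hprod, Real.sqrt_one, Complex.ofReal_one]
  have h2 := hinv ⟨U₁, hU₁⟩ ⟨M₂ᴴ, hM₂H⟩ _ hdetD
  rw [show ((⟨M₂ᴴ, hM₂H⟩ : Matrix.specialUnitaryGroup (Fin 2) ℂ) :
      Matrix (Fin 2) (Fin 2) ℂ)⁻¹ = M₂ from Matrix.inv_eq_right_inv hM₂unit] at h2
  have h1 : F A = F (diagonal fun i => ((Real.sqrt (l i) : ℝ) : ℂ)) := by
    rw [hAeq]; exact h2
  rcases le_total (l 1) (l 0) with hord | hord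
  · obtain ⟨e0, e1⟩ := eig_id' (l 0) (l 1) _ (hpos 0) (hpos 1) hprod hsum hord
    have hDc : cpath (arcosh (((Aᴴ * A).trace).re / 2))
        = diagonal fun i => ((Real.sqrt (l i) : ℝ) : ℂ) := by
      rw [cpath]
      exact diagonal_congr' fun i => by fin_cases i <;> simp [e0, e1]
    rw [h1, ← hDc]
  · obtain ⟨e0, e1⟩ := eig_id' (l 1) (l 0) _ (hpos 1) (hpos 0)
      (by rw [mul_comm]; exact hprod) (by rw [← hsum]; ring) hord
    have hDc : cpath (-(arcosh (((Aᴴ * A).trace).re / 2)))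
        = diagonal fun i => ((Real.sqrt (l i) : ℝ) : ℂ) := by
      rw [cpath]
      exact diagonal_congr' fun i => by
        fin_cases i <;> simp [e0, e1, neg_div, neg_neg]
    rw [h1, ← hDc, hflip]
end

section
/- The image of the map β : M(2,ℂ) → ℝ × ℂ defined by β(z) = (½(|z₁|²+|z₂|²+|z₃|²+|z₄|²), z₁z₄ − z₂z₃) is exactly the set {(a,u) ∈ ℝ×ℂ : a ≥ |u|}. -/
theorem beta_range :
    Set.range (fun z : ℂ × ℂ × ℂ × ℂ =>
        ((‖z.1‖ ^ 2 + ‖z.2.1‖ ^ 2 + ‖z.2.2.1‖ ^ 2 +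
            ‖z.2.2.2‖ ^ 2) / 2,
          z.1 * z.2.2.2 - z.2.1 * z.2.2.1)) =
      {p : ℝ × ℂ | ‖p.2‖ ≤ p.1} := by
  ext ⟨a, u⟩
  simp only [Set.mem_range, Set.mem_setOf_eq, Prod.mk.injEq]
  constructor
  · rintro ⟨⟨z1, z2, z3, z4⟩, ha, hu⟩
    subst ha; subst hu
    have h1 : ‖z1 * z4 - z2 * z3‖ ≤
        ‖z1‖ * ‖z4‖ + ‖z2‖ * ‖z3‖ := by
      calc ‖z1 * z4 - z2 * z3‖ ≤
          ‖z1 * z4‖ + ‖z2 * z3‖ := by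
            exact (norm_sub_le _ _)
        _ = ‖z1‖ * ‖z4‖ + ‖z2‖ * ‖z3‖ := by
            simp [map_mul]
    nlinarith [sq_nonneg (‖z1‖ - ‖z4‖),
      sq_nonneg (‖z2‖ - ‖z3‖)]
  · intro h
    have ha0 : 0 ≤ a := le_trans (norm_nonneg u) h
    set e : ℂ := if u = 0 then 1 else u / (‖u‖ : ℂ) with he
    have habs_e : ‖e‖ = 1 := by
      rw [he]
      split_ifs with h0
      · simp
      · rw [norm_div]
        simp [h0]
    have hue : (‖u‖ : ℂ) * e = u := by
      rw [he]
      split_ifs with h0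
      · simp [h0]
      · rw [mul_comm]; exact div_mul_cancel₀ u (Complex.ofReal_ne_zero.mpr (norm_ne_zero_iff.mpr h0))
    set x : ℂ := (((a + ‖u‖) / 2 : ℝ) : ℂ) * e with hx
    set y : ℂ := (((a - ‖u‖) / 2 : ℝ) : ℂ) * e with hy
    obtain ⟨p, hp⟩ := Complex.isAlgClosed.exists_pow_nat_eq x two_pos
    obtain ⟨q, hq⟩ := Complex.isAlgClosed.exists_pow_nat_eq y two_pos
    refine ⟨⟨p, q, q, p⟩, ?_, ?_⟩
    · have hpx : ‖p‖ ^ 2 = (a + ‖u‖) / 2 := by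
        rw [← norm_pow, hp, hx, norm_mul, habs_e, Complex.norm_real, Real.norm_eq_abs,
          abs_of_nonneg (by positivity), mul_one]
      have hqy : ‖q‖ ^ 2 = (a - ‖u‖) / 2 := by
        rw [← norm_pow, hq, hy, norm_mul, habs_e, Complex.norm_real, Real.norm_eq_abs,
          abs_of_nonneg (by linarith), mul_one]
      rw [hpx, hqy]; ring
    · show p * p - q * q = u
      rw [← sq, ← sq, hp, hq, hx, hy, ← sub_mul, ← Complex.ofReal_sub]
      rw [show (a + ‖u‖) / 2 - (a - ‖u‖) / 2 = ‖u‖ by ring]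
      exact hue
end

section
/- Let f̃ be a smooth function on ℂ* with f̃(z) = f̃(z⁻¹) and depending only on |z|, and let h be a smooth function on ℂ* depending only on |z| such that ∂²h/∂z∂z̄ = ∂²f̃/∂z∂z̄. Then 2f̃(z) = h(z) + h(z⁻¹) + C for some constant C and all z ∈ ℂ*. -/
/-- The Laplacian on `ℂ ≃ ℝ²`: `Δu = D²u(1,1) + D²u(i,i)` (equal to `4 ∂²u/∂z∂z̄`). -/
noncomputable def lap (u : ℂ → ℝ) (z : ℂ) : ℝ :=
  iteratedFDeriv ℝ 2 u z ![1, 1] + iteratedFDeriv ℝ 2 u z ![Complex.I, Complex.I]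

open Complex in
private lemma exp_curve_deriv {μ a : ℂ} (t : ℝ) :
    HasDerivAt (fun s : ℝ => Complex.exp (a + s • μ)) (μ * Complex.exp (a + t • μ)) t := by
  have h1 : HasDerivAt (fun s : ℝ => a + s • μ) μ t := by
    simpa using (hasDerivAt_id t).smul_const μ |>.const_add a
  simpa [smul_eq_mul, mul_comm, Function.comp_def] using (Complex.hasDerivAt_exp (a + t • μ)).scomp t h1

open Complex in
private lemma key1 {w : ℂ → ℝ} (hw : ContDiffOn ℝ (⊤ : ℕ∞) w {z : ℂ | z ≠ 0}) (μ a : ℂ) (t : ℝ) :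
    HasDerivAt (fun s : ℝ => w (Complex.exp (a + s • μ)))
      (fderiv ℝ w (Complex.exp (a + t • μ)) (μ * Complex.exp (a + t • μ))) t := by
  have hne : Complex.exp (a + t • μ) ≠ 0 := Complex.exp_ne_zero _
  have hca : ContDiffAt ℝ (⊤ : ℕ∞) w (Complex.exp (a + t • μ)) :=
    hw.contDiffAt (IsOpen.mem_nhds (isOpen_compl_singleton) hne)
  have hd : HasFDerivAt w (fderiv ℝ w (Complex.exp (a + t • μ))) (Complex.exp (a + t • μ)) :=
    (hca.differentiableAt (by simp)).hasFDerivAt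
  exact hd.comp_hasDerivAt t (exp_curve_deriv t)

open Complex in
private lemma key2 {w : ℂ → ℝ} (hw : ContDiffOn ℝ (⊤ : ℕ∞) w {z : ℂ | z ≠ 0}) (μ a : ℂ) (t : ℝ) :
    HasDerivAt (fun s : ℝ => fderiv ℝ w (Complex.exp (a + s • μ)) (μ * Complex.exp (a + s • μ)))
      (fderiv ℝ (fderiv ℝ w) (Complex.exp (a + t • μ)) (μ * Complex.exp (a + t • μ))
          (μ * Complex.exp (a + t • μ))
        + fderiv ℝ w (Complex.exp (a + t • μ)) (μ * (μ * Complex.exp (a + t • μ)))) t := by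
  have hne : Complex.exp (a + t • μ) ≠ 0 := Complex.exp_ne_zero _
  have hca : ContDiffAt ℝ (⊤ : ℕ∞) w (Complex.exp (a + t • μ)) :=
    hw.contDiffAt (IsOpen.mem_nhds (isOpen_compl_singleton) hne)
  have hB : ContDiffAt ℝ (⊤ : ℕ∞) (fderiv ℝ w) (Complex.exp (a + t • μ)) :=
    hca.fderiv_right (by simp)
  have hdB : HasFDerivAt (fderiv ℝ w) (fderiv ℝ (fderiv ℝ w) (Complex.exp (a + t • μ)))
      (Complex.exp (a + t • μ)) := (hB.differentiableAt (by simp)).hasFDerivAt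
  have h1 : HasDerivAt (fun s : ℝ => fderiv ℝ w (Complex.exp (a + s • μ)))
      (fderiv ℝ (fderiv ℝ w) (Complex.exp (a + t • μ)) (μ * Complex.exp (a + t • μ))) t :=
    hdB.comp_hasDerivAt t (exp_curve_deriv t)
  have h2 : HasDerivAt (fun s : ℝ => μ * Complex.exp (a + s • μ))
      (μ * (μ * Complex.exp (a + t • μ))) t := (exp_curve_deriv t).const_mul μ
  exact h1.clm_apply h2


private lemma bilin_smul (A : ℂ →L[ℝ] ℂ →L[ℝ] ℝ) (r : ℝ) (v v' : ℂ) :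
    A (r • v) (r • v') = r ^ 2 * A v v' := by
  simp only [ContinuousLinearMap.map_smul, ContinuousLinearMap.smul_apply, smul_eq_mul]
  ring

private lemma lin_smul (B : ℂ →L[ℝ] ℝ) (r : ℝ) (v : ℂ) : B (r • v) = r * B v := by
  rw [ContinuousLinearMap.map_smul, smul_eq_mul]

private lemma keyPhi {w : ℂ → ℝ} (hw : ContDiffOn ℝ (⊤ : ℕ∞) w {z : ℂ | z ≠ 0}) (t : ℝ) :
    HasDerivAt (fun s : ℝ => w (Complex.exp ↑s))
      (fderiv ℝ w (Complex.exp ↑t) (Complex.exp ↑t)) t := by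
  simpa [Complex.real_smul] using key1 hw 1 0 t

private lemma keyD {w : ℂ → ℝ} (hw : ContDiffOn ℝ (⊤ : ℕ∞) w {z : ℂ | z ≠ 0})
    (hrad : ∀ z z' : ℂ, z ≠ 0 → z' ≠ 0 → ‖z‖ = ‖z'‖ → w z = w z') (t : ℝ) :
    HasDerivAt (fun s : ℝ => fderiv ℝ w (Complex.exp ↑s) (Complex.exp ↑s))
      (Real.exp t ^ 2 * lap w (Real.exp t)) t := by
  set z₀ : ℂ := Complex.exp (↑t) with hz₀def
  set r : ℝ := Real.exp t with hrdef
  have hz₀ : z₀ = ((r : ℝ) : ℂ) := by rw [hz₀def, hrdef, Complex.ofReal_exp]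
  -- angular identity
  have hang0 : ∀ θ : ℝ, fderiv ℝ w (Complex.exp (↑t + θ • Complex.I))
      (Complex.I * Complex.exp (↑t + θ • Complex.I)) = 0 := by
    intro θ
    have hconst : (fun θ : ℝ => w (Complex.exp (↑t + θ • Complex.I))) = fun _ => w z₀ := by
      funext θ
      exact hrad _ _ (Complex.exp_ne_zero _) (Complex.exp_ne_zero _)
        (by simp [Complex.norm_exp, Complex.real_smul, hz₀def])
    have h0 : HasDerivAt (fun θ : ℝ => w (Complex.exp (↑t + θ • Complex.I))) 0 θ := by
      rw [hconst]; exact hasDerivAt_const _ _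
    exact (key1 hw Complex.I ↑t θ).unique h0
  have hang : HasDerivAt (fun θ : ℝ => fderiv ℝ w (Complex.exp (↑t + θ • Complex.I))
      (Complex.I * Complex.exp (↑t + θ • Complex.I))) 0 0 := by
    have hz : (fun θ : ℝ => fderiv ℝ w (Complex.exp (↑t + θ • Complex.I))
        (Complex.I * Complex.exp (↑t + θ • Complex.I))) = fun _ => (0:ℝ) := funext hang0
    rw [hz]; exact hasDerivAt_const _ _
  have hang2 := ((key2 hw Complex.I ↑t 0).unique hang)
  have hexp0 : Complex.exp (↑t + (0:ℝ) • Complex.I) = z₀ := by simp [hz₀def]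
  rw [hexp0] at hang2
  -- radial second derivative
  have hmain := key2 hw 1 0 t
  have hexp1 : ∀ s : ℝ, (0:ℂ) + s • (1:ℂ) = (s:ℂ) := by
    intro s; simp [Complex.real_smul]
  simp only [hexp1, one_mul] at hmain
  -- scalar identities
  have hz₀1 : z₀ = r • (1:ℂ) := by rw [hz₀, Complex.real_smul, mul_one]
  have hIz₀ : Complex.I * z₀ = r • Complex.I := by rw [hz₀, Complex.real_smul, mul_comm]
  have hIIz₀ : Complex.I * (Complex.I * z₀) = -z₀ := by
    rw [← mul_assoc, Complex.I_mul_I]; ring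
  have a1 : fderiv ℝ (fderiv ℝ w) z₀ z₀ z₀ = r^2 * fderiv ℝ (fderiv ℝ w) z₀ 1 1 :=
    calc fderiv ℝ (fderiv ℝ w) z₀ z₀ z₀
        = fderiv ℝ (fderiv ℝ w) z₀ (r • (1:ℂ)) (r • (1:ℂ)) := by rw [← hz₀1]
      _ = r^2 * fderiv ℝ (fderiv ℝ w) z₀ 1 1 := bilin_smul _ _ _ _
  have a2 : fderiv ℝ (fderiv ℝ w) z₀ (Complex.I * z₀) (Complex.I * z₀)
      = r^2 * fderiv ℝ (fderiv ℝ w) z₀ Complex.I Complex.I :=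
    calc fderiv ℝ (fderiv ℝ w) z₀ (Complex.I * z₀) (Complex.I * z₀)
        = fderiv ℝ (fderiv ℝ w) z₀ (r • Complex.I) (r • Complex.I) := by rw [← hIz₀]
      _ = _ := bilin_smul _ _ _ _
  have b1 : fderiv ℝ w z₀ z₀ = r * fderiv ℝ w z₀ 1 :=
    calc fderiv ℝ w z₀ z₀ = fderiv ℝ w z₀ (r • (1:ℂ)) := by rw [← hz₀1]
      _ = r * fderiv ℝ w z₀ 1 := lin_smul _ _ _
  have b2 : fderiv ℝ w z₀ (Complex.I * (Complex.I * z₀)) = -(r * fderiv ℝ w z₀ 1) := by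
    rw [hIIz₀, map_neg, b1]
  rw [a2, b2] at hang2
  have hlapval : lap w ((r:ℝ):ℂ) = fderiv ℝ (fderiv ℝ w) z₀ 1 1
      + fderiv ℝ (fderiv ℝ w) z₀ Complex.I Complex.I := by
    rw [lap, iteratedFDeriv_two_apply, iteratedFDeriv_two_apply, ← hz₀]
    simp
  convert hmain using 1
  rw [hlapval, a1, b1]
  linarith

theorem radial_potential_symmetrize (F h : ℂ → ℝ)
    (hF : ContDiffOn ℝ (⊤ : ℕ∞) F {z : ℂ | z ≠ 0})
    (hh : ContDiffOn ℝ (⊤ : ℕ∞) h {z : ℂ | z ≠ 0})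
    (hFrad : ∀ z w : ℂ, z ≠ 0 → w ≠ 0 → ‖z‖ = ‖w‖ → F z = F w)
    (hhrad : ∀ z w : ℂ, z ≠ 0 → w ≠ 0 → ‖z‖ = ‖w‖ → h z = h w)
    (hFsym : ∀ z : ℂ, z ≠ 0 → F z⁻¹ = F z)
    (hlap : ∀ z : ℂ, z ≠ 0 → lap h z = lap F z) :
    ∃ C : ℝ, ∀ z : ℂ, z ≠ 0 → 2 * F z = h z + h z⁻¹ + C := by
  set Dh : ℝ → ℝ := fun s => fderiv ℝ h (Complex.exp ↑s) (Complex.exp ↑s) with hDh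
  set DF : ℝ → ℝ := fun s => fderiv ℝ F (Complex.exp ↑s) (Complex.exp ↑s) with hDF
  have hδ : ∀ s : ℝ, HasDerivAt (fun s => Dh s - DF s) 0 s := by
    intro s
    have heq : lap h ((Real.exp s : ℝ) : ℂ) = lap F ((Real.exp s : ℝ) : ℂ) :=
      hlap _ (Complex.ofReal_ne_zero.mpr (Real.exp_ne_zero s))
    have := (keyD hh hhrad s).sub (keyD hF hFrad s)
    rw [heq, sub_self] at this
    exact this
  have hδc : ∀ s : ℝ, Dh s - DF s = Dh 0 - DF 0 := fun s =>
    is_const_of_deriv_eq_zero (fun x => (hδ x).differentiableAt)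
      (fun x => (hδ x).deriv) s 0
  set a : ℝ := Dh 0 - DF 0 with ha
  set G : ℝ → ℝ := fun s => h (Complex.exp ↑s) - F (Complex.exp ↑s) with hGdef
  have hGd : ∀ s : ℝ, HasDerivAt (fun s => G s - a * s) 0 s := by
    intro s
    have h1 := ((keyPhi hh s).sub (keyPhi hF s)).sub ((hasDerivAt_id s).const_mul a)
    have h2 : Dh s - DF s - a * 1 = 0 := by rw [hδc s]; ring
    rw [show (0:ℝ) = Dh s - DF s - a * 1 from h2.symm]
    exact h1
  have hGc : ∀ s : ℝ, G s - a * s = G 0 - a * 0 := fun s =>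
    is_const_of_deriv_eq_zero (fun x => (hGd x).differentiableAt)
      (fun x => (hGd x).deriv) s 0
  refine ⟨-(2 * G 0), fun z hz => ?_⟩
  have hpos : 0 < ‖z‖ := norm_pos_iff.mpr hz
  set t : ℝ := Real.log ‖z‖ with htdef
  have he : ‖Complex.exp ↑t‖ = ‖z‖ := by
    rw [Complex.norm_exp]; simp [htdef, Real.exp_log hpos]
  have he' : ‖Complex.exp ↑(-t)‖ = ‖z⁻¹‖ := by
    rw [Complex.norm_exp]
    simp [htdef, Real.exp_neg, Real.exp_log hpos, map_inv₀]
  have h1 : h z = h (Complex.exp ↑t) := hhrad _ _ hz (Complex.exp_ne_zero _) he.symm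
  have h2 : h z⁻¹ = h (Complex.exp ↑(-t)) :=
    hhrad _ _ (inv_ne_zero hz) (Complex.exp_ne_zero _) he'.symm
  have f1 : F z = F (Complex.exp ↑t) := hFrad _ _ hz (Complex.exp_ne_zero _) he.symm
  have f2 : F z⁻¹ = F (Complex.exp ↑(-t)) :=
    hFrad _ _ (inv_ne_zero hz) (Complex.exp_ne_zero _) he'.symm
  have fs := hFsym z hz
  have g1 : G t = h (Complex.exp ↑t) - F (Complex.exp ↑t) := rfl
  have g2 : G (-t) = h (Complex.exp ↑(-t)) - F (Complex.exp ↑(-t)) := rfl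
  have csum : G t + G (-t) = 2 * G 0 := by linear_combination hGc t + hGc (-t)
  linear_combination g1 + g2 - csum - h1 - h2 + f1 + f2 - fs
end

section
/- For c > 1, the integral 2π∫₀^∞ log(1 + r²/c) · r/(1+r²)² dr equals π (log c)/(c − 1). -/
/-!
Substituting `u = r²` turns the integrand into `log (1 + u / c) / (2 (1 + u)²)`, which has the
elementary primitive
`G u = log ((1 + u) / (c + u)) / (2 (c - 1)) - log (1 + u / c) / (2 (1 + u))`.
Since `G` tends to `0` at infinity and `G 0 = - log c / (2 (c - 1))`, the integral is
`log c / (2 (c - 1))`.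
-/

open Filter Real Set Topology MeasureTheory

noncomputable def radialLogPrimitive (c u : ℝ) : ℝ :=
  log ((1 + u) / (c + u)) / (2 * (c - 1)) - log (1 + u / c) / (2 * (1 + u))

theorem radialLogPrimitive_zero (c : ℝ) :
    radialLogPrimitive c 0 = -log c / (2 * (c - 1)) := by
  simp [radialLogPrimitive, log_inv, neg_div]

theorem hasDerivAt_radialLogPrimitive {c u : ℝ} (hc : 0 < c) (hc1 : c ≠ 1) (hu : 0 ≤ u) :
    HasDerivAt (radialLogPrimitive c) (log (1 + u / c) / (2 * (1 + u) ^ 2)) u := by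
  have h1 : 0 < 1 + u := by positivity
  have h2 : 0 < c + u := by positivity
  have h3 : 0 < 1 + u / c := by positivity
  have hid := hasDerivAt_id' u
  have hquot := ((hid.const_add 1).div (hid.const_add c) h2.ne').log (div_pos h1 h2).ne'
  have hlog := ((hid.div_const c).const_add 1).log h3.ne'
  refine ((hquot.div_const (2 * (c - 1))).sub
    (hlog.div ((hid.const_add 1).const_mul 2) (by positivity))).congr_deriv ?_
  have : c - 1 ≠ 0 := sub_ne_zero.mpr hc1
  simp only [Pi.div_apply]
  field_simp
  ring

theorem tendsto_log_one_add_div_div_one_add_atTop {c : ℝ} (hc : 0 < c) :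
    Tendsto (fun u => log (1 + u / c) / (1 + u)) atTop (𝓝 0) := by
  have hx : Tendsto (fun u : ℝ => 1 + u / c) atTop atTop :=
    tendsto_atTop_add_const_left _ _ (tendsto_id.atTop_div_const hc)
  refine ((tendsto_pow_log_div_mul_add_atTop c (1 - c) 1 hc.ne').comp hx).congr fun u => ?_
  simp only [Function.comp_apply, pow_one]
  congr 1
  field_simp
  ring

theorem tendsto_add_div_add_atTop (a b : ℝ) :
    Tendsto (fun u : ℝ => (a + u) / (b + u)) atTop (𝓝 1) := by
  have h : Tendsto (fun u : ℝ => 1 + (a - b) / (b + u)) atTop (𝓝 (1 + 0)) :=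
    (tendsto_const_nhds.div_atTop (tendsto_atTop_add_const_left _ _ tendsto_id)).const_add 1
  rw [add_zero] at h
  refine h.congr' ?_
  filter_upwards [eventually_gt_atTop (-b)] with u hu
  have : b + u ≠ 0 := by linarith
  field_simp
  ring

theorem tendsto_radialLogPrimitive_atTop {c : ℝ} (hc : 0 < c) :
    Tendsto (radialLogPrimitive c) atTop (𝓝 0) := by
  have hquot := (continuousAt_log one_ne_zero).tendsto.comp (tendsto_add_div_add_atTop 1 c)
  rw [log_one] at hquot
  have h := (hquot.div_const (2 * (c - 1))).sub
    ((tendsto_log_one_add_div_div_one_add_atTop hc).div_const 2)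
  rw [zero_div, zero_div, sub_zero] at h
  refine h.congr fun u => ?_
  simp only [Function.comp_apply, radialLogPrimitive, div_div, mul_comm]

theorem radial_log_integral (c : ℝ) (hc : 1 < c) :
    2 * Real.pi * ∫ r in Set.Ioi (0 : ℝ),
        Real.log (1 + r ^ 2 / c) * (r / (1 + r ^ 2) ^ 2) =
      Real.pi * Real.log c / (c - 1) := by
  have hc0 : 0 < c := by linarith
  have hderiv : ∀ r ∈ Ici (0 : ℝ), HasDerivAt (fun r => radialLogPrimitive c (r ^ 2))
      (log (1 + r ^ 2 / c) * (r / (1 + r ^ 2) ^ 2)) r := fun r _ => by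
    refine ((hasDerivAt_radialLogPrimitive hc0 hc.ne' (sq_nonneg r)).comp (h := (· ^ 2)) r
      (hasDerivAt_pow 2 r)).congr_deriv ?_
    simp only [Nat.cast_ofNat, Nat.add_one_sub_one, pow_one]
    field_simp
  have hnonneg : ∀ r ∈ Ioi (0 : ℝ), 0 ≤ log (1 + r ^ 2 / c) * (r / (1 + r ^ 2) ^ 2) :=
    fun r hr => mul_nonneg (log_nonneg (le_add_of_nonneg_right (by positivity)))
      (by positivity [hr.out.le])
  have hlim : Tendsto (fun r => radialLogPrimitive c (r ^ 2)) atTop (𝓝 0) :=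
    (tendsto_radialLogPrimitive_atTop hc0).comp (tendsto_pow_atTop two_ne_zero)
  rw [integral_Ioi_of_hasDerivAt_of_nonneg' hderiv hnonneg hlim, sq, zero_mul,
    radialLogPrimitive_zero]
  have : c - 1 ≠ 0 := by linarith
  field_simp
  ring
end

section
/- The function f(y) = π y coth(y) (extended continuously by f(0) = π) satisfies f'(y) > 0 for all y > 0 and f''(y) > 0 for all y ≥ 0. -/
/-!
Away from `0`, `f' = π (cosh y sinh y - y) / sinh² y` and `f'' = 2π (y cosh y - sinh y) / sinh³ y`,
which are positive for `y > 0` because `sinh 2y > 2y` and `tanh y < y`. At the removable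
singularity the derivatives come from squeezing difference quotients: `|f y - π| ≤ π y²` gives
`f' 0 = 0`, and `f' y / y` lies between `(2π/3) / cosh² y` and `(2π/3) cosh 2y`, which gives
`f'' 0 = 2π/3`. The bounds rest on the Taylor-type inequalities
`2y + (2y)³/6 < sinh 2y < 2y + (2y)³/6 · cosh 2y`, each hyperbolic inequality following from the
previous one by comparing derivatives.
-/

/-- The lump Kähler potential profile `f(y) = π y coth y`, extended by `f(0) = π`. -/
noncomputable def lumpf (y : ℝ) : ℝ :=
  if y = 0 then Real.pi else Real.pi * y * Real.cosh y / Real.sinh y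

open Real Filter Topology Set

theorem lt_of_hasDerivAt_pos {u u' : ℝ → ℝ} {a y : ℝ} (hu : ∀ x, HasDerivAt u (u' x) x)
    (hu' : ∀ x, a < x → 0 < u' x) (hy : a < y) : u a < u y := by
  refine strictMonoOn_of_deriv_pos (convex_Ici a) (HasDerivAt.continuousOn fun x _ => hu x)
    (fun x hx => ?_) self_mem_Ici hy.le hy
  rw [interior_Ici] at hx
  exact (hu x).deriv ▸ hu' x hx

theorem hasDerivAt_zero_of_abs_sub_le_sq {f : ℝ → ℝ} {x C : ℝ}
    (h : ∀ y, |f y - f x| ≤ C * (y - x) ^ 2) : HasDerivAt f 0 x := by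
  rw [hasDerivAt_iff_tendsto_slope]
  refine squeeze_zero_norm' (a := fun y => C * |y - x|) ?_ ?_
  · filter_upwards [self_mem_nhdsWithin] with y hy
    rw [slope_def_field, norm_eq_abs, abs_div, div_le_iff₀ (abs_pos.2 (sub_ne_zero.2 hy)),
      mul_assoc, ← sq, sq_abs]
    exact h y
  · exact ((by fun_prop : Continuous fun y => C * |y - x|).tendsto' x 0 (by simp)).mono_left
      nhdsWithin_le_nhds

theorem hasDerivAt_of_slope_squeeze {f l u : ℝ → ℝ} {x L : ℝ} (hl : Tendsto l (𝓝 x) (𝓝 L))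
    (hu : Tendsto u (𝓝 x) (𝓝 L)) (h : ∀ y ≠ x, l y ≤ slope f x y ∧ slope f x y ≤ u y) :
    HasDerivAt f L x :=
  hasDerivAt_iff_tendsto_slope.2 <| tendsto_of_tendsto_of_tendsto_of_le_of_le'
    (hl.mono_left nhdsWithin_le_nhds) (hu.mono_left nhdsWithin_le_nhds)
    (eventually_nhdsWithin_of_forall fun y hy => (h y hy).1)
    (eventually_nhdsWithin_of_forall fun y hy => (h y hy).2)

theorem sinh_lt_mul_cosh {y : ℝ} (hy : 0 < y) : sinh y < y * cosh y := by
  have := lt_of_hasDerivAt_pos (u := fun x => x * cosh x - sinh x) (u' := fun x => x * sinh x)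
    (fun x => (((hasDerivAt_id' x).mul (hasDerivAt_cosh x)).sub (hasDerivAt_sinh x)).congr_deriv
      (by ring))
    (fun x hx => mul_pos hx (sinh_pos_iff.2 hx)) hy
  linarith [sinh_zero]

theorem one_add_sq_div_two_lt_cosh {y : ℝ} (hy : 0 < y) : 1 + y ^ 2 / 2 < cosh y := by
  have := lt_of_hasDerivAt_pos (u := fun x => cosh x - x ^ 2 / 2) (u' := fun x => sinh x - x)
    (fun x => ((hasDerivAt_cosh x).sub ((hasDerivAt_pow 2 x).div_const 2)).congr_deriv
      (by push_cast; ring))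
    (fun x hx => sub_pos.2 (self_lt_sinh_iff.2 hx)) hy
  linarith [cosh_zero]

theorem add_pow_three_div_six_lt_sinh {y : ℝ} (hy : 0 < y) : y + y ^ 3 / 6 < sinh y := by
  have := lt_of_hasDerivAt_pos (u := fun x => sinh x - x - x ^ 3 / 6)
    (u' := fun x => cosh x - (1 + x ^ 2 / 2))
    (fun x => (((hasDerivAt_sinh x).sub (hasDerivAt_id' x)).sub
      ((hasDerivAt_pow 3 x).div_const 6)).congr_deriv (by push_cast; ring))
    (fun x hx => sub_pos.2 (one_add_sq_div_two_lt_cosh hx)) hy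
  linarith [sinh_zero]

theorem cosh_sub_one_lt {y : ℝ} (hy : 0 < y) : cosh y - 1 < y ^ 2 / 2 * cosh y := by
  have := lt_of_hasDerivAt_pos (u := fun x => x ^ 2 / 2 * cosh x - cosh x)
    (u' := fun x => x * cosh x - sinh x + x ^ 2 / 2 * sinh x)
    (fun x => ((((hasDerivAt_pow 2 x).div_const 2).mul (hasDerivAt_cosh x)).sub
      (hasDerivAt_cosh x)).congr_deriv (by push_cast; ring))
    (fun x hx => by
      have := sinh_pos_iff.2 hx
      have := sinh_lt_mul_cosh hx
      positivity) hy
  linarith [cosh_zero]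

theorem sinh_sub_self_lt {y : ℝ} (hy : 0 < y) : sinh y - y < y ^ 3 / 6 * cosh y := by
  have := lt_of_hasDerivAt_pos (u := fun x => x ^ 3 / 6 * cosh x - sinh x + x)
    (u' := fun x => x ^ 2 / 2 * cosh x - (cosh x - 1) + x ^ 3 / 6 * sinh x)
    (fun x => (((((hasDerivAt_pow 3 x).div_const 6).mul (hasDerivAt_cosh x)).sub
      (hasDerivAt_sinh x)).add (hasDerivAt_id' x)).congr_deriv (by push_cast; ring))
    (fun x hx => by
      have := sinh_pos_iff.2 hx
      have := sub_pos.2 (cosh_sub_one_lt hx)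
      positivity) hy
  linarith [cosh_zero, sinh_zero]

theorem mul_cosh_sub_sinh_lt {y : ℝ} (hy : 0 < y) : y * cosh y - sinh y < y ^ 2 * sinh y := by
  have := lt_of_hasDerivAt_pos (u := fun x => x ^ 2 * sinh x + sinh x - x * cosh x)
    (u' := fun x => x * sinh x + x ^ 2 * cosh x)
    (fun x => ((((hasDerivAt_pow 2 x).mul (hasDerivAt_sinh x)).add (hasDerivAt_sinh x)).sub
      ((hasDerivAt_id' x).mul (hasDerivAt_cosh x))).congr_deriv (by push_cast; ring))
    (fun x hx => by have := sinh_pos_iff.2 hx; positivity) hy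
  linarith [sinh_zero]

theorem lumpf_neg (y : ℝ) : lumpf (-y) = lumpf y := by
  by_cases hy : y = 0
  · simp [hy]
  · simp [lumpf, hy, neg_div_neg_eq]

theorem lumpf_abs (y : ℝ) : lumpf |y| = lumpf y := by
  rcases abs_choice y with h | h <;> rw [h]
  exact lumpf_neg y

theorem abs_lumpf_sub_pi_le (y : ℝ) : |lumpf y - π| ≤ π * y ^ 2 := by
  rw [← lumpf_abs, ← sq_abs y]
  rcases (abs_nonneg y).eq_or_lt with h | h
  · simp [← h, lumpf]
  have hs := sinh_pos_iff.2 h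
  have hnum := sinh_lt_mul_cosh h
  have : lumpf |y| - π = π * (|y| * cosh |y| - sinh |y|) / sinh |y| := by
    rw [lumpf, if_neg h.ne']
    field_simp
  rw [this, abs_of_pos (by have := sub_pos.2 hnum; positivity), div_le_iff₀ hs, mul_assoc]
  exact mul_le_mul_of_nonneg_left (mul_cosh_sub_sinh_lt h).le pi_pos.le

/-- At `y = 0` the formula reads `0 / 0 = 0`, which is the true value of `lumpf'` there. -/
noncomputable def lumpfDeriv (y : ℝ) : ℝ := π * (cosh y * sinh y - y) / sinh y ^ 2

theorem hasDerivAt_lumpf (y : ℝ) : HasDerivAt lumpf (lumpfDeriv y) y := by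
  rcases eq_or_ne y 0 with rfl | hy
  · simpa [lumpfDeriv] using
      hasDerivAt_zero_of_abs_sub_le_sq fun y => by simpa [lumpf] using abs_lumpf_sub_pi_le y
  have hs : sinh y ≠ 0 := sinh_ne_zero.2 hy
  have hquot : HasDerivAt (fun x => π * x * cosh x / sinh x)
      (((π * 1 * cosh y + π * y * sinh y) * sinh y - π * y * cosh y * cosh y) / sinh y ^ 2) y :=
    (((hasDerivAt_id' y).const_mul π).mul (hasDerivAt_cosh y)).div (hasDerivAt_sinh y) hs
  refine (hquot.congr_deriv ?_).congr_of_eventuallyEq ?_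
  · rw [lumpfDeriv, div_eq_div_iff (by positivity) (by positivity)]
    linear_combination (-(π * y) * sinh y ^ 2) * cosh_sq_sub_sinh_sq y
  · filter_upwards [isOpen_ne.mem_nhds hy] with x hx
    exact if_neg hx

theorem deriv_lumpf : deriv lumpf = lumpfDeriv := funext fun y => (hasDerivAt_lumpf y).deriv

theorem lumpfDeriv_pos {y : ℝ} (hy : 0 < y) : 0 < lumpfDeriv y := by
  have hs := sinh_pos_iff.2 hy
  have h2y : 2 * y < sinh (2 * y) := self_lt_sinh_iff.2 (by positivity)
  have : 0 < cosh y * sinh y - y := by linarith [sinh_two_mul y]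
  unfold lumpfDeriv
  positivity

theorem lumpfDeriv_neg (y : ℝ) : lumpfDeriv (-y) = -lumpfDeriv y := by
  simp only [lumpfDeriv, sinh_neg, cosh_neg, neg_sq]
  ring

theorem lumpfDeriv_div_abs (y : ℝ) : lumpfDeriv |y| / |y| = lumpfDeriv y / y := by
  rcases abs_choice y with h | h <;> rw [h]
  rw [lumpfDeriv_neg, neg_div_neg_eq]

theorem hasDerivAt_lumpfDeriv {y : ℝ} (hy : y ≠ 0) :
    HasDerivAt lumpfDeriv (2 * π * (y * cosh y - sinh y) / sinh y ^ 3) y := by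
  have hs : sinh y ≠ 0 := sinh_ne_zero.2 hy
  have hquot : HasDerivAt lumpfDeriv
      ((π * (sinh y * sinh y + cosh y * cosh y - 1) * sinh y ^ 2
        - π * (cosh y * sinh y - y) * (↑2 * sinh y ^ (2 - 1) * cosh y)) / (sinh y ^ 2) ^ 2) y :=
    ((((hasDerivAt_cosh y).mul (hasDerivAt_sinh y)).sub (hasDerivAt_id' y)).const_mul π).div
      ((hasDerivAt_sinh y).pow 2) (pow_ne_zero 2 hs)
  refine hquot.congr_deriv ?_
  rw [div_eq_div_iff (by positivity) (by positivity)]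
  linear_combination (-π * sinh y ^ 5) * cosh_sq_sub_sinh_sq y

theorem lumpfDeriv_div_self_mem_Ioo {y : ℝ} (hy : 0 < y) :
    lumpfDeriv y / y ∈ Ioo (2 * π / 3 / cosh y ^ 2) (2 * π / 3 * cosh (2 * y)) := by
  have hs := sinh_pos_iff.2 hy
  have hc := cosh_pos y
  have h2y : 0 < 2 * y := by positivity
  have hnum_lo : 2 / 3 * y ^ 3 < cosh y * sinh y - y := by
    linarith [add_pow_three_div_six_lt_sinh h2y, sinh_two_mul y]
  have hnum_hi : cosh y * sinh y - y < 2 / 3 * y ^ 3 * cosh (2 * y) := by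
    linarith [sinh_sub_self_lt h2y, sinh_two_mul y]
  have hden_lo : y ^ 3 < y * sinh y ^ 2 := by
    have := pow_lt_pow_left₀ (self_lt_sinh_iff.2 hy) hy.le two_ne_zero
    nlinarith
  have hden_hi : y * sinh y ^ 2 < y ^ 3 * cosh y ^ 2 := by
    have := pow_lt_pow_left₀ (sinh_lt_mul_cosh hy) hs.le two_ne_zero
    nlinarith
  have hform : lumpfDeriv y / y = π * (cosh y * sinh y - y) / (y * sinh y ^ 2) := by
    rw [lumpfDeriv, div_div, mul_comm (sinh y ^ 2)]
  rw [hform]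
  constructor
  · rw [div_lt_div_iff₀ (by positivity) (by positivity)]
    calc 2 * π / 3 * (y * sinh y ^ 2) < 2 * π / 3 * (y ^ 3 * cosh y ^ 2) := by gcongr
      _ = π * (2 / 3 * y ^ 3) * cosh y ^ 2 := by ring
      _ < π * (cosh y * sinh y - y) * cosh y ^ 2 := by gcongr
  · rw [div_lt_iff₀ (by positivity)]
    calc π * (cosh y * sinh y - y) < π * (2 / 3 * y ^ 3 * cosh (2 * y)) := by gcongr
      _ = 2 * π / 3 * cosh (2 * y) * y ^ 3 := by ring
      _ < 2 * π / 3 * cosh (2 * y) * (y * sinh y ^ 2) := by gcongr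

theorem hasDerivAt_lumpfDeriv_zero : HasDerivAt lumpfDeriv (2 * π / 3) 0 := by
  refine hasDerivAt_of_slope_squeeze (l := fun y => 2 * π / 3 / cosh y ^ 2)
    (u := fun y => 2 * π / 3 * cosh (2 * y))
    ((continuous_const.div (by fun_prop) fun y => by positivity).tendsto' 0 _ (by simp))
    ((by fun_prop : Continuous _).tendsto' 0 _ (by simp)) fun y hy => ?_
  have hslope : slope lumpfDeriv 0 y = lumpfDeriv |y| / |y| := by
    rw [slope_def_field, lumpfDeriv_div_abs]
    simp [lumpfDeriv]
  have := lumpfDeriv_div_self_mem_Ioo (abs_pos.2 hy)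
  have hcosh : cosh (2 * |y|) = cosh (2 * y) := by rw [← cosh_abs (2 * y), abs_mul, abs_two]
  rw [cosh_abs, hcosh] at this
  rw [hslope]
  exact ⟨this.1.le, this.2.le⟩

theorem lumpf_convex_increasing :
    (∀ y : ℝ, 0 < y → 0 < deriv lumpf y) ∧ (∀ y : ℝ, 0 ≤ y → 0 < deriv (deriv lumpf) y) := by
  rw [deriv_lumpf]
  refine ⟨fun y hy => lumpfDeriv_pos hy, fun y hy => ?_⟩
  rcases hy.eq_or_lt with rfl | hy
  · rw [hasDerivAt_lumpfDeriv_zero.deriv]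
    positivity
  · rw [(hasDerivAt_lumpfDeriv hy.ne').deriv]
    have := sub_pos.2 (sinh_lt_mul_cosh hy)
    have := sinh_pos_iff.2 hy
    positivity
end

section
/- Let Ω = (π³/3) lim_{y→∞} f'(y)³ be finite, D = lim f'(y), and k = sup{λ ≥ 0 : ∫₀^∞ e^{λy} (d/dy)[f'(y)³] dy < ∞}. If m is the largest integer l with ∫₀^∞ (cosh y)^l e^{−f(y)/2ħ} (d/dy)[f'(y)³] dy < ∞, then D/(2ħ) + k − 1 ≤ m ≤ D/(2ħ) + k, i.e., (3Ω)^{1/3}/(2πħ) + k − 1 ≤ m ≤ (3Ω)^{1/3}/(2πħ) + k. -/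
open Filter MeasureTheory Set

lemma aux_lin_lower (f : ℝ → ℝ) (hfd : Differentiable ℝ f)
    (c T : ℝ) (h : ∀ t, T ≤ t → c ≤ deriv f t) :
    ∀ y, T ≤ y → f T + c * (y - T) ≤ f y := by
  intro y hy
  have hmono : MonotoneOn (fun y => f y - c * y) (Set.Ici T) := by
    apply monotoneOn_of_deriv_nonneg (convex_Ici T)
    · exact ((hfd.continuous).sub (continuous_const.mul continuous_id)).continuousOn
    · exact (hfd.sub ((differentiable_id.const_mul c))).differentiableOn
    · intro x hx
      rw [interior_Ici] at hx
      have : deriv (fun y => f y - c * y) x = deriv f x - c := by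
        have h1 : HasDerivAt (fun y => f y - c * y) (deriv f x - c * 1) x :=
          (hfd x).hasDerivAt.sub ((hasDerivAt_id x).const_mul c)
        simpa using h1.deriv
      rw [this, sub_nonneg]
      exact h x (le_of_lt hx)
  have h2 := hmono (Set.self_mem_Ici (a := T)) (Set.mem_Ici.2 hy) hy
  simp only at h2
  linarith

lemma aux_cosh_lower (y : ℝ) : Real.exp y ≤ 2 * Real.cosh y := by
  rw [Real.cosh_eq]
  have := (Real.exp_pos (-y)).le
  linarith

lemma aux_cosh_upper (y : ℝ) (hy : 0 ≤ y) : Real.cosh y ≤ Real.exp y := by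
  rw [Real.cosh_eq]
  have h : Real.exp (-y) ≤ Real.exp y := Real.exp_le_exp.2 (by linarith)
  linarith

lemma aux_zpow_upper (l : ℤ) (y : ℝ) (hy : 0 ≤ y) :
    Real.cosh y ^ l ≤ 2 ^ l.natAbs * Real.exp ((l : ℝ) * y) := by
  have hcp := Real.cosh_pos (x := y)
  rcases l with n | n
  · simp only [Int.ofNat_eq_coe, zpow_natCast, Int.natAbs_natCast]
    calc Real.cosh y ^ n ≤ Real.exp y ^ n :=
          pow_le_pow_left₀ hcp.le (aux_cosh_upper y hy) n
      _ = Real.exp ((n : ℝ) * y) := by rw [← Real.exp_nat_mul]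
      _ ≤ 2 ^ n * Real.exp ((n : ℝ) * y) := by
          nlinarith [Real.exp_pos ((n : ℝ) * y), one_le_pow₀ (by norm_num : (1:ℝ) ≤ 2) (n := n)]
  · have hnab : (Int.negSucc n).natAbs = n + 1 := rfl
    rw [hnab, zpow_negSucc]
    have hkey : Real.exp y ^ (n + 1) ≤ 2 ^ (n + 1) * Real.cosh y ^ (n + 1) := by
      calc Real.exp y ^ (n + 1) ≤ (2 * Real.cosh y) ^ (n + 1) :=
            pow_le_pow_left₀ (Real.exp_pos y).le (aux_cosh_lower y) _
        _ = 2 ^ (n + 1) * Real.cosh y ^ (n + 1) := mul_pow _ _ _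
    rw [inv_le_iff_one_le_mul₀ (by positivity)]
    have hexp : Real.exp ((Int.negSucc n : ℝ) * y) = (Real.exp y ^ (n + 1))⁻¹ := by
      rw [← Real.exp_nat_mul, ← Real.exp_neg]
      congr 1
      push_cast [Int.cast_negSucc]
      ring
    rw [hexp]
    calc (1 : ℝ) = Real.exp y ^ (n+1) * (Real.exp y ^ (n+1))⁻¹ := by
          rw [mul_inv_cancel₀ (by positivity)]
      _ ≤ (2 ^ (n+1) * Real.cosh y ^ (n+1)) * (Real.exp y ^ (n+1))⁻¹ := by
          apply mul_le_mul_of_nonneg_right hkey (by positivity)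
      _ = 2 ^ (n+1) * (Real.exp y ^ (n+1))⁻¹ * Real.cosh y ^ (n+1) := by ring

lemma aux_exp_lower (m : ℕ) (y : ℝ) :
    Real.exp ((m : ℝ) * y) ≤ 2 ^ m * Real.cosh y ^ m := by
  calc Real.exp ((m : ℝ) * y) = Real.exp y ^ m := by rw [← Real.exp_nat_mul]
    _ ≤ (2 * Real.cosh y) ^ m := pow_le_pow_left₀ (Real.exp_pos y).le (aux_cosh_lower y) m
    _ = 2 ^ m * Real.cosh y ^ m := mul_pow _ _ _

open Filter MeasureTheory in
theorem hilbert_space_dimension_bounds (f : ℝ → ℝ) (hbar D k Ω : ℝ) (m : ℤ)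
    (hf : ContDiff ℝ (⊤ : ℕ∞) f)
    (hf' : ∀ y : ℝ, 0 < y → 0 < deriv f y)
    (hf'' : ∀ y : ℝ, 0 ≤ y → 0 < deriv (deriv f) y)
    (hhb : 0 < hbar)
    (hD : Tendsto (deriv f) atTop (nhds D))
    (hΩ : Ω = Real.pi ^ 3 / 3 * D ^ 3)
    (hk : IsLUB {c : ℝ | 0 ≤ c ∧ IntegrableOn
        (fun y => Real.exp (c * y) * deriv (fun t => (deriv f t) ^ 3) y) (Set.Ioi 0)} k)
    (hm : IsGreatest {l : ℤ | IntegrableOn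
        (fun y => (Real.cosh y) ^ l * Real.exp (-f y / (2 * hbar)) *
          deriv (fun t => (deriv f t) ^ 3) y) (Set.Ioi 0)} m) :
    (D / (2 * hbar) + k - 1 ≤ (m : ℝ) ∧ (m : ℝ) ≤ D / (2 * hbar) + k) ∧
      ((3 * Ω) ^ ((1 : ℝ) / 3) / (2 * Real.pi * hbar) + k - 1 ≤ (m : ℝ) ∧
        (m : ℝ) ≤ (3 * Ω) ^ ((1 : ℝ) / 3) / (2 * Real.pi * hbar) + k) := by
  -- basic differentiability facts
  have hfi : ContDiff ℝ ((⊤ : ℕ∞) : WithTop ℕ∞) f := hf.of_le (by simp)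
  have hfd : Differentiable ℝ f := (contDiff_infty_iff_deriv.mp hfi).1
  have hf1 : ContDiff ℝ ((⊤ : ℕ∞) : WithTop ℕ∞) (deriv f) := (contDiff_infty_iff_deriv.mp hfi).2
  have hf1d : Differentiable ℝ (deriv f) := (contDiff_infty_iff_deriv.mp hf1).1
  have hf2c : Continuous (deriv (deriv f)) := ((contDiff_infty_iff_deriv.mp hf1).2).continuous
  set g : ℝ → ℝ := deriv (fun t => (deriv f t) ^ 3) with hg_def
  have hgy : ∀ y, HasDerivAt (fun t => (deriv f t) ^ 3)
      (3 * (deriv f y) ^ 2 * deriv (deriv f) y) y := by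
    intro y
    have := ((hf1d y).hasDerivAt.fun_pow 3)
    exact this.congr_deriv (by norm_num)
  have g_eq : ∀ y, g y = 3 * (deriv f y) ^ 2 * deriv (deriv f) y := fun y => (hgy y).deriv
  have g_cont : Continuous g := by
    have : g = fun y => 3 * (deriv f y) ^ 2 * deriv (deriv f) y := funext g_eq
    rw [this]
    exact (continuous_const.mul ((hf1d.continuous).pow 2)).mul hf2c
  have g_nonneg : ∀ y, 0 ≤ y → 0 ≤ g y := by
    intro y hy
    rw [g_eq]
    have := hf'' y hy
    positivity
  -- monotonicity of deriv f and D bounds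
  have hf'mono : MonotoneOn (deriv f) (Set.Ici 0) := by
    apply monotoneOn_of_deriv_nonneg (convex_Ici 0) (hf1d.continuous).continuousOn
      hf1d.differentiableOn
    intro x hx
    rw [interior_Ici] at hx
    exact (hf'' x hx.le).le
  have hf'leD : ∀ t, 0 ≤ t → deriv f t ≤ D := by
    intro t ht
    refine ge_of_tendsto hD (eventually_atTop.2 ⟨t, fun s hs => hf'mono ht (le_trans ht hs) hs⟩)
  have hDpos : 0 < D :=
    lt_of_lt_of_le (hf' 1 one_pos) (hf'leD 1 one_pos.le)
  -- f y ≤ f 0 + D * y for y ≥ 0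
  have f_le : ∀ y, 0 ≤ y → f y ≤ f 0 + D * y := by
    intro y hy
    have := aux_lin_lower (fun t => -f t) hfd.neg (-D) 0 ?_ y hy
    · simp only [sub_zero] at this
      have h2 : deriv (fun t => -f t) = fun t => -deriv f t := funext fun t => deriv.fun_neg
      linarith [this]
    · intro t ht
      have h2 : deriv (fun t => -f t) t = -deriv f t := deriv.fun_neg
      rw [h2]
      linarith [hf'leD t ht]
  -- continuity of the m-integrand
  have phi_cont : ∀ l : ℤ, Continuous (fun y => (Real.cosh y) ^ l *
      Real.exp (-f y / (2 * hbar)) * g y) := by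
    intro l
    refine ((Real.continuous_cosh.zpow₀ l fun x => Or.inl (Real.cosh_pos x).ne').mul
      (Real.continuous_exp.comp ?_)).mul g_cont
    exact (hfd.continuous.neg).div_const _
  -- 0 belongs to the k-set
  have zero_mem : (0:ℝ) ∈ {c : ℝ | 0 ≤ c ∧ IntegrableOn
      (fun y => Real.exp (c * y) * g y) (Set.Ioi 0)} := by
    refine ⟨le_refl 0, ?_⟩
    have hInt : IntegrableOn g (Set.Ioi 0) := by
      refine integrableOn_Ioi_deriv_of_nonneg' (g := fun t => (deriv f t) ^ 3) (g' := g)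
        (fun x _ => (g_eq x) ▸ hgy x) (fun x hx => g_nonneg x (le_of_lt hx)) (l := D ^ 3) ?_
      exact ((continuous_pow 3).tendsto D).comp hD
    refine hInt.congr_fun ?_ measurableSet_Ioi
    intro y _
    simp
  have k_nonneg : 0 ≤ k := hk.1 zero_mem
  -- downward closedness of the k-set
  have down_closed : ∀ c ∈ {c : ℝ | 0 ≤ c ∧ IntegrableOn
      (fun y => Real.exp (c * y) * g y) (Set.Ioi 0)}, ∀ c', 0 ≤ c' → c' ≤ c →
      c' ∈ {c : ℝ | 0 ≤ c ∧ IntegrableOn (fun y => Real.exp (c * y) * g y) (Set.Ioi 0)} := by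
    intro c hc c' hc'0 hc'le
    refine ⟨hc'0, ?_⟩
    refine Integrable.mono' hc.2 ?_ ?_
    · exact ((Real.continuous_exp.comp (continuous_const.mul continuous_id)).mul
        g_cont).aestronglyMeasurable.restrict
    · rw [ae_restrict_iff' measurableSet_Ioi]
      filter_upwards with y
      intro hy
      have hgnn := g_nonneg y (le_of_lt hy)
      rw [Real.norm_eq_abs, abs_of_nonneg (by positivity)]
      have : Real.exp (c' * y) ≤ Real.exp (c * y) :=
        Real.exp_le_exp.2 (mul_le_mul_of_nonneg_right hc'le (le_of_lt hy))
      exact mul_le_mul_of_nonneg_right this hgnn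
  -- upper bound
  have upper : (m : ℝ) ≤ D / (2 * hbar) + k := by
    rcases le_or_gt ((m : ℝ)) (D / (2 * hbar)) with h | h
    · linarith
    · have hm0 : 0 < m := by
        have : (0:ℝ) < (m:ℝ) := lt_of_le_of_lt (by positivity) h
        exact_mod_cast this
      set n := m.toNat with hn_def
      have hn : (n : ℤ) = m := Int.toNat_of_nonneg hm0.le
      have hnR : (n : ℝ) = (m : ℝ) := by exact_mod_cast hn
      set c := (m : ℝ) - D / (2 * hbar) with hc_def
      have hcmem : c ∈ {c : ℝ | 0 ≤ c ∧ IntegrableOn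
          (fun y => Real.exp (c * y) * g y) (Set.Ioi 0)} := by
        refine ⟨by rw [hc_def]; linarith, ?_⟩
        refine Integrable.mono' ((hm.1).const_mul (2 ^ n * Real.exp (f 0 / (2 * hbar)))) ?_ ?_
        · exact ((Real.continuous_exp.comp (continuous_const.mul continuous_id)).mul
            g_cont).aestronglyMeasurable.restrict
        · rw [ae_restrict_iff' measurableSet_Ioi]
          filter_upwards with y hy
          have hgnn := g_nonneg y (le_of_lt hy)
          rw [Real.norm_eq_abs, abs_of_nonneg (by positivity)]
          have key : Real.exp (c * y) ≤
              (2 ^ n * Real.exp (f 0 / (2 * hbar))) *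
                ((Real.cosh y) ^ m * Real.exp (-f y / (2 * hbar))) := by
            have e0 : Real.exp (c * y) =
                Real.exp ((n : ℝ) * y) * Real.exp (-(D / (2 * hbar)) * y) := by
              rw [← Real.exp_add]
              congr 1
              rw [hnR, hc_def]
              ring
            have e1 : Real.exp ((n : ℝ) * y) ≤ 2 ^ n * (Real.cosh y) ^ m := by
              rw [← hn, zpow_natCast]
              exact aux_exp_lower n y
            have e2 : Real.exp (-(D / (2 * hbar)) * y) ≤
                Real.exp (f 0 / (2 * hbar)) * Real.exp (-f y / (2 * hbar)) := by
              rw [← Real.exp_add]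
              apply Real.exp_le_exp.2
              have hfy := f_le y (le_of_lt hy)
              rw [← add_div, show -(D / (2 * hbar)) * y = -(D * y) / (2 * hbar) by ring]
              exact div_le_div_of_nonneg_right (by linarith) (by linarith)
            calc Real.exp (c * y)
                = Real.exp ((n : ℝ) * y) * Real.exp (-(D / (2 * hbar)) * y) := e0
              _ ≤ (2 ^ n * (Real.cosh y) ^ m) *
                  (Real.exp (f 0 / (2 * hbar)) * Real.exp (-f y / (2 * hbar))) :=
                  mul_le_mul e1 e2 (Real.exp_pos _).le (by positivity)
              _ = (2 ^ n * Real.exp (f 0 / (2 * hbar))) *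
                  ((Real.cosh y) ^ m * Real.exp (-f y / (2 * hbar))) := by ring
          calc Real.exp (c * y) * g y
              ≤ ((2 ^ n * Real.exp (f 0 / (2 * hbar))) *
                  ((Real.cosh y) ^ m * Real.exp (-f y / (2 * hbar)))) * g y :=
                mul_le_mul_of_nonneg_right key hgnn
            _ = (2 ^ n * Real.exp (f 0 / (2 * hbar))) *
                ((Real.cosh y) ^ m * Real.exp (-f y / (2 * hbar)) * g y) := by ring
      have := hk.1 hcmem
      rw [hc_def] at this
      linarith
  -- lower bound
  have lower : D / (2 * hbar) + k - 1 ≤ (m : ℝ) := by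
    set x := D / (2 * hbar) + k with hx_def
    set l' : ℤ := ⌈x⌉ - 1 with hl'_def
    have hl'lt : (l' : ℝ) < x := by
      rw [hl'_def]
      push_cast
      linarith [Int.ceil_lt_add_one x]
    have hl'ge : x - 1 ≤ (l' : ℝ) := by
      rw [hl'_def]
      push_cast
      linarith [Int.le_ceil x]
    suffices h : IntegrableOn (fun y => (Real.cosh y) ^ l' *
        Real.exp (-f y / (2 * hbar)) * g y) (Set.Ioi 0) by
      have hlem := hm.2 h
      have : (l' : ℝ) ≤ (m : ℝ) := by exact_mod_cast hlem
      linarith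
    set c' := (l' : ℝ) - D / (2 * hbar) with hc'
    have hc'k : c' < k := by
      rw [hc']
      rw [hx_def] at hl'lt
      linarith
    obtain ⟨c'', hc''mem, hc''gt⟩ : ∃ c'' ∈ {c : ℝ | 0 ≤ c ∧ IntegrableOn
        (fun y => Real.exp (c * y) * g y) (Set.Ioi 0)}, c' < c'' := by
      by_contra hcon
      push_neg at hcon
      exact absurd (hk.2 fun z hz => hcon z hz) (not_le.2 hc'k)
    set δ := 2 * hbar * (c'' - c') with hδ
    have hδpos : 0 < δ := by
      rw [hδ]
      have : 0 < c'' - c' := by linarith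
      positivity
    obtain ⟨T₀, hT₀⟩ := eventually_atTop.1
      (hD.eventually (eventually_gt_nhds (show D - δ < D by linarith)))
    set T := max T₀ 1 with hT_def
    have hTpos : (0:ℝ) < T := lt_of_lt_of_le one_pos (le_max_right _ _)
    have f_ge : ∀ y, T ≤ y → f T + (D - δ) * (y - T) ≤ f y :=
      aux_lin_lower f hfd (D - δ) T
        (fun t ht => (hT₀ t (le_trans (le_max_left _ _) ht)).le)
    have hsplit : Set.Ioi (0:ℝ) = Set.Ioc 0 T ∪ Set.Ioi T :=
      (Set.Ioc_union_Ioi_eq_Ioi hTpos.le).symm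
    rw [hsplit]
    refine IntegrableOn.union ?_ ?_
    · exact (phi_cont l').integrableOn_Ioc
    · set C := 2 ^ l'.natAbs * Real.exp (((D - δ) * T - f T) / (2 * hbar)) with hC_def
      refine Integrable.mono'
        ((hc''mem.2.mono_set (Set.Ioi_subset_Ioi hTpos.le)).const_mul C) ?_ ?_
      · exact (phi_cont l').aestronglyMeasurable.restrict
      · rw [ae_restrict_iff' measurableSet_Ioi]
        filter_upwards with y hy
        have hy0 : (0:ℝ) < y := lt_trans hTpos hy
        have hgnn := g_nonneg y hy0.le
        have hcoshpos := Real.cosh_pos y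
        rw [Real.norm_eq_abs, abs_of_nonneg (by positivity)]
        have key : (Real.cosh y) ^ l' * Real.exp (-f y / (2 * hbar)) ≤
            C * Real.exp (c'' * y) := by
          have e1 := aux_zpow_upper l' y hy0.le
          have e2 : Real.exp (-f y / (2 * hbar)) ≤
              Real.exp (-(f T + (D - δ) * (y - T)) / (2 * hbar)) := by
            apply Real.exp_le_exp.2
            have hfy := f_ge y (le_of_lt hy)
            exact div_le_div_of_nonneg_right (by linarith) (by linarith)
          calc (Real.cosh y) ^ l' * Real.exp (-f y / (2 * hbar))
              ≤ (2 ^ l'.natAbs * Real.exp ((l' : ℝ) * y)) *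
                Real.exp (-(f T + (D - δ) * (y - T)) / (2 * hbar)) :=
                mul_le_mul e1 e2 (Real.exp_pos _).le (by positivity)
            _ = C * Real.exp (c'' * y) := by
                rw [hC_def, mul_assoc, mul_assoc, ← Real.exp_add, ← Real.exp_add]
                congr 1
                have hl'c : (l' : ℝ) = c' + D / (2 * hbar) := by rw [hc']; ring
                rw [hl'c, hδ]
                field_simp
                ring
        calc (Real.cosh y) ^ l' * Real.exp (-f y / (2 * hbar)) * g y
            ≤ (C * Real.exp (c'' * y)) * g y := mul_le_mul_of_nonneg_right key hgnn
          _ = C * (Real.exp (c'' * y) * g y) := by ring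
  -- final assembly
  have hπD : (3 * Ω) ^ ((1:ℝ)/3) = Real.pi * D := by
    have h3Ω : 3 * Ω = (Real.pi * D) ^ (3:ℕ) := by rw [hΩ]; ring
    rw [h3Ω, ← Real.rpow_natCast (Real.pi * D) 3,
      ← Real.rpow_mul (mul_nonneg Real.pi_pos.le hDpos.le)]
    norm_num
  refine ⟨⟨lower, upper⟩, ?_⟩
  rw [hπD]
  have hpi := Real.pi_pos
  have heq : Real.pi * D / (2 * Real.pi * hbar) = D / (2 * hbar) := by
    field_simp
  rw [heq]
  exact ⟨lower, upper⟩
end
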